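/- arXiv:2603.08141 — 5 statements merged into one kernel-verified Lean document; each statement's English description precedes it below -/
import Mathlib

section
/- Suppose G is connected and (E_k)_{k∈ℕ} is a sequence of Borel subsets of G with 0 < μ(E_k) < ∞ for all k. If there exists a neighborhood U of the identity e such that β_{E_k}(x) → 0 as k → ∞ for μ-almost every x ∈ U, then β_{E_k}(x) → 0 for every x ∈ G, i.e. (E_k) is pointwise Følner on all of G. -/
open MeasureTheory Filter Topology
open scoped Pointwise ENNReal

/-- For a Borel set `E` with `0 < μ E < ∞`, the Følner defect function
`β_E(x) = μ(E \ Ex⁻¹) / μ(E)`. Here `Ex⁻¹ = {y | yx ∈ E} = (· * x) ⁻¹' E`. -/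
noncomputable def folnerDefect {G : Type*} [Group G] [MeasurableSpace G]
    (μ : Measure G) (E : Set G) (x : G) : ℝ :=
  (μ (E \ (· * x) ⁻¹' E)).toReal / (μ E).toReal

/-!
The points `x` with `β_{E_k}(x) → 0` form a subgroup: `β_E(x⁻¹) = β_E(x)` and
`β_E(xy) ≤ β_E(x) + β_E(y)` by right invariance of `μ`. By hypothesis this subgroup contains a
set of positive measure, so by the Steinhaus theorem it is a neighbourhood of `1`, hence an open
subgroup. Open subgroups are closed, so in a connected group it is everything.
-/

section FolnerDefect

variable {G : Type*} [Group G] [MeasurableSpace G] (μ : Measure G)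

lemma folnerDefect_nonneg (E : Set G) (x : G) : 0 ≤ folnerDefect μ E x := by
  unfold folnerDefect; positivity

@[simp]
lemma folnerDefect_one (E : Set G) : folnerDefect μ E 1 = 0 := by
  simp [folnerDefect]

-- With `μ E = ∞` the denominator `(μ E).toReal` is `0`.
lemma folnerDefect_of_measure_eq_top {E : Set G} (hE : μ E = ∞) (x : G) :
    folnerDefect μ E x = 0 := by
  simp [folnerDefect, hE]

variable [MeasurableMul G] [μ.IsMulRightInvariant]

lemma measure_sdiff_preimage_mul_right_inv {E : Set G} (hE : MeasurableSet E) (hfin : μ E ≠ ∞)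
    (x : G) : μ (E \ (· * x⁻¹) ⁻¹' E) = μ (E \ (· * x) ⁻¹' E) := by
  have hshift : (· * x) ⁻¹' (E \ (· * x⁻¹) ⁻¹' E) = (· * x) ⁻¹' E \ E := by
    ext z; simp [mul_assoc]
  rw [← measure_preimage_mul_right μ x, hshift,
    measure_sdiff_symm (hE.preimage (measurable_mul_const x)).nullMeasurableSet
      hE.nullMeasurableSet (measure_preimage_mul_right μ x E)
      (measure_ne_top_of_subset Set.inter_subset_right hfin)]

lemma measure_sdiff_preimage_mul_right_mul_le (E : Set G) (x y : G) :
    μ (E \ (· * (x * y)) ⁻¹' E) ≤ μ (E \ (· * x) ⁻¹' E) + μ (E \ (· * y) ⁻¹' E) := by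
  have hsub : E \ (· * (x * y)) ⁻¹' E ⊆
      (E \ (· * x) ⁻¹' E) ∪ (· * x) ⁻¹' (E \ (· * y) ⁻¹' E) := by
    intro z hz
    by_cases hzx : z * x ∈ E
    · exact Or.inr ⟨hzx, by simpa [mul_assoc] using hz.2⟩
    · exact Or.inl ⟨hz.1, hzx⟩
  calc μ (E \ (· * (x * y)) ⁻¹' E)
      ≤ μ (E \ (· * x) ⁻¹' E) + μ ((· * x) ⁻¹' (E \ (· * y) ⁻¹' E)) :=
        (measure_mono hsub).trans (measure_union_le _ _)
    _ = μ (E \ (· * x) ⁻¹' E) + μ (E \ (· * y) ⁻¹' E) := by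
        rw [measure_preimage_mul_right]

lemma folnerDefect_inv {E : Set G} (hE : MeasurableSet E) (x : G) :
    folnerDefect μ E x⁻¹ = folnerDefect μ E x := by
  rcases eq_or_ne (μ E) ∞ with hinf | hfin
  · simp [folnerDefect_of_measure_eq_top μ hinf]
  · simp only [folnerDefect, measure_sdiff_preimage_mul_right_inv μ hE hfin]

lemma folnerDefect_mul_le (E : Set G) (x y : G) :
    folnerDefect μ E (x * y) ≤ folnerDefect μ E x + folnerDefect μ E y := by
  rcases eq_or_ne (μ E) ∞ with hinf | hfin
  · simp [folnerDefect_of_measure_eq_top μ hinf]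
  have hfin' (z : G) : μ (E \ (· * z) ⁻¹' E) ≠ ∞ := measure_ne_top_of_subset Set.sdiff_subset hfin
  unfold folnerDefect
  rw [← add_div, ← ENNReal.toReal_add (hfin' x) (hfin' y)]
  gcongr
  · exact ENNReal.add_ne_top.mpr ⟨hfin' x, hfin' y⟩
  · exact measure_sdiff_preimage_mul_right_mul_le μ E x y

def pointwiseFolnerSubgroup (E : ℕ → Set G) (hE : ∀ k, MeasurableSet (E k)) : Subgroup G where
  carrier := {x | Tendsto (fun k => folnerDefect μ (E k) x) atTop (𝓝 0)}
  one_mem' := by simp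
  mul_mem' {x y} hx hy := by
    exact squeeze_zero (fun k => folnerDefect_nonneg μ (E k) (x * y))
      (fun k => folnerDefect_mul_le μ (E k) x y) (by simpa using hx.add hy)
  inv_mem' {x} hx := by
    simpa only [Set.mem_ofPred_eq, folnerDefect_inv μ (hE _)] using hx

end FolnerDefect

section Steinhaus

variable {G : Type*} [Group G] [TopologicalSpace G] [IsTopologicalGroup G] [LocallyCompactSpace G]
  [MeasurableSpace G] [BorelSpace G] (μ : Measure G) [μ.IsMulRightInvariant]
  [μ.IsOpenPosMeasure] [μ.Regular]

-- `μ.inv` is a left Haar measure, to which the Steinhaus theorem applies.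
theorem inv_mul_mem_nhds_one_of_measure_pos {A : Set G} (hA : MeasurableSet A) (hpos : 0 < μ A)
    (hfin : μ A ≠ ∞) : A⁻¹ * A ∈ 𝓝 (1 : G) := by
  have : μ.inv.IsHaarMeasure := ⟨⟩
  simpa [div_eq_mul_inv] using Measure.div_mem_nhds_one_of_haar_pos_ne_top μ.inv A⁻¹ hA.inv
    (by rwa [Measure.inv_apply, inv_inv]) (by rwa [Measure.inv_apply, inv_inv])

theorem Subgroup.isOpen_of_measure_pos_subset (H : Subgroup G) {A : Set G}
    (hA : MeasurableSet A) (hpos : 0 < μ A) (hfin : μ A ≠ ∞) (hAH : A ⊆ H) :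
    IsOpen (H : Set G) := by
  refine H.isOpen_of_mem_nhds (Filter.mem_of_superset
    (inv_mul_mem_nhds_one_of_measure_pos μ hA hpos hfin) ?_)
  rintro _ ⟨a, ha, b, hb, rfl⟩
  simpa using H.mul_mem (H.inv_mem (hAH (Set.mem_inv.mp ha))) (hAH hb)

end Steinhaus

theorem Subgroup.eq_top_of_isOpen {G : Type*} [Group G] [TopologicalSpace G]
    [SeparatelyContinuousMul G] [ConnectedSpace G] (H : Subgroup G) (hH : IsOpen (H : Set G)) :
    H = ⊤ :=
  SetLike.coe_injective ((OpenSubgroup.isClopen ⟨H, hH⟩).eq_univ ⟨1, H.one_mem⟩)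

theorem exists_measurableSet_subset_of_ae_mem_nhds {X : Type*} [TopologicalSpace X]
    [LocallyCompactSpace X] [MeasurableSpace X] [OpensMeasurableSpace X] (μ : Measure X)
    [IsFiniteMeasureOnCompacts μ] [μ.IsOpenPosMeasure] {U : Set X} {x : X} (hU : U ∈ 𝓝 x)
    {p : X → Prop} (h : ∀ᵐ y ∂μ, y ∈ U → p y) :
    ∃ A, MeasurableSet A ∧ 0 < μ A ∧ μ A ≠ ∞ ∧ A ⊆ {y | p y} := by
  obtain ⟨K, hK, hKU, hKc⟩ := local_compact_nhds hU
  set N := toMeasurable μ {y | ¬(y ∈ U → p y)}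
  have hN : μ N = 0 := by rw [measure_toMeasurable]; exact ae_iff.mp h
  refine ⟨interior K \ N, isOpen_interior.measurableSet.diff (measurableSet_toMeasurable _ _),
    ?_, ?_, ?_⟩
  · rw [measure_sdiff_null hN]
    exact isOpen_interior.measure_pos μ ⟨x, mem_interior_iff_mem_nhds.mpr hK⟩
  · exact measure_ne_top_of_subset (Set.sdiff_subset.trans interior_subset) hKc.measure_ne_top
  · intro y hy
    by_contra hpy
    exact hy.2 (subset_toMeasurable _ _ fun hy' => hpy (hy' (hKU (interior_subset hy.1))))

theorem pointwiseFolner_of_ae_nhds_general {G : Type*} [Group G] [TopologicalSpace G]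
    [IsTopologicalGroup G] [LocallyCompactSpace G]
    [ConnectedSpace G] [MeasurableSpace G] [BorelSpace G]
    (μ : Measure G) [μ.IsMulRightInvariant]
    [μ.IsOpenPosMeasure] [μ.Regular]
    (E : ℕ → Set G) (hE : ∀ k, MeasurableSet (E k))
    (U : Set G) (hU : U ∈ nhds (1 : G))
    (h : ∀ᵐ x ∂μ, x ∈ U → Tendsto (fun k => folnerDefect μ (E k) x) atTop (nhds 0)) :
    ∀ x : G, Tendsto (fun k => folnerDefect μ (E k) x) atTop (nhds 0) := by
  obtain ⟨A, hA, hpos, hfin, hA_good⟩ := exists_measurableSet_subset_of_ae_mem_nhds μ hU h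
  have hopen :=
    (pointwiseFolnerSubgroup μ E hE).isOpen_of_measure_pos_subset μ hA hpos hfin hA_good
  exact (Subgroup.eq_top_iff' _).mp (Subgroup.eq_top_of_isOpen _ hopen)

/-- If `G` is connected and `β_{E_k} → 0` almost everywhere on some
neighborhood of the identity, then `β_{E_k}(x) → 0` for every `x ∈ G`. -/
theorem pointwiseFolner_of_ae_nhds {G : Type*} [Group G] [TopologicalSpace G]
    [IsTopologicalGroup G] [LocallyCompactSpace G] [SigmaCompactSpace G] [T2Space G]
    [ConnectedSpace G] [MeasurableSpace G] [BorelSpace G]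
    (μ : Measure G) [μ.IsMulRightInvariant] [IsFiniteMeasureOnCompacts μ]
    [μ.IsOpenPosMeasure] [μ.Regular] (hμ : μ ≠ 0)
    (E : ℕ → Set G) (hE : ∀ k, MeasurableSet (E k))
    (hE0 : ∀ k, 0 < μ (E k)) (hEfin : ∀ k, μ (E k) < ∞)
    (U : Set G) (hU : U ∈ nhds (1 : G))
    (h : ∀ᵐ x ∂μ, x ∈ U → Tendsto (fun k => folnerDefect μ (E k) x) atTop (nhds 0)) :
    ∀ x : G, Tendsto (fun k => folnerDefect μ (E k) x) atTop (nhds 0) :=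
  pointwiseFolner_of_ae_nhds_general μ E hE U hU h
end

section
/- Let (E_k)_{k∈ℕ} be a sequence of Borel subsets of G with 0 < μ(E_k) < ∞ for all k. If β_{E_k}(x) → 0 as k → ∞ for every x ∈ G, then (E_k) is a Følner sequence, i.e. β_{E_k} → 0 uniformly on every compact subset of G. -/
open MeasureTheory Filter Topology
open scoped Pointwise ENNReal

/-- A sequence of Borel sets of finite positive measure is a Følner sequence if
`β_{E k} → 0` uniformly on every compact subset of `G`. -/
def IsFolnerSeq {G : Type*} [Group G] [TopologicalSpace G] [MeasurableSpace G]
    (μ : Measure G) (E : ℕ → Set G) : Prop :=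
  ∀ K : Set G, IsCompact K →
    TendstoUniformlyOn (fun k x => folnerDefect μ (E k) x) 0 atTop K

/-!
Write `b(x) = μ(E \ Ex⁻¹) / μ(E)`. Right invariance of `μ` makes `b` subadditive,
`b(xy) ≤ b(x) + b(y)`, and continuous (hence measurable). Averaging `b(x) ≤ b(v⁻¹) + b(vx)`
over `v` in a compact neighbourhood `U` of the identity gives, for `x` in a compact set `K`,
`b(x) μ(U) ≤ ∫_U b(v⁻¹) dμ(v) + ∫_{UK} b dμ`.
The right-hand side does not depend on `x`, and for `b = b_{E_k}` it tends to `0` by dominated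
convergence, since `b_{E_k} ≤ 1` converges pointwise to `0`.
-/

open Set
open scoped symmDiff

theorem MeasureTheory.tendsto_measure_diff_of_tendsto_measure_symmDiff {α ι : Type*}
    [MeasurableSpace α] {μ : Measure α} {l : Filter ι} {s : ι → Set α} {t E : Set α}
    (hst : Tendsto (fun i => μ (s i ∆ t)) l (𝓝 0)) (hE : μ (E \ t) ≠ ∞) :
    Tendsto (fun i => μ (E \ s i)) l (𝓝 (μ (E \ t))) := by
  have triangle (A B : Set α) : μ (E \ B) ≤ μ (E \ A) + μ (A ∆ B) :=
    (measure_mono (sdiff_triangle E A B)).trans <|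
      (measure_union_le _ _).trans (by gcongr; exact le_sup_left)
  rw [ENNReal.tendsto_nhds hE]
  intro ε hε
  filter_upwards [ENNReal.tendsto_nhds_zero.mp hst ε hε] with i hi
  constructor
  · rw [tsub_le_iff_right]
    exact (triangle (s i) t).trans (by gcongr)
  · exact (triangle t (s i)).trans (by rw [symmDiff_comm]; gcongr)

theorem MeasureTheory.tendsto_setLIntegral_zero_of_le {α ι : Type*} [MeasurableSpace α]
    {μ : Measure α} {l : Filter ι} [l.IsCountablyGenerated] {F : ι → α → ℝ≥0∞} {C : ℝ≥0∞}
    (hC : C ≠ ∞) (hF_meas : ∀ i, Measurable (F i)) (hF_le : ∀ i a, F i a ≤ C)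
    (hF_lim : ∀ a, Tendsto (F · a) l (𝓝 0)) {s : Set α} (hs : μ s ≠ ∞) :
    Tendsto (fun i => ∫⁻ a in s, F i a ∂μ) l (𝓝 0) := by
  simpa using tendsto_lintegral_filter_of_dominated_convergence (μ := μ.restrict s) (fun _ => C)
    (.of_forall hF_meas) (.of_forall fun i => .of_forall (hF_le i))
    (by simpa using ENNReal.mul_ne_top hC hs) (.of_forall hF_lim)

theorem ENNReal.tendstoUniformlyOn_toReal_zero_of_le {ι α : Type*} {l : Filter ι} {s : Set α}
    {f : ι → α → ℝ≥0∞} {c : ι → ℝ≥0∞} (hc : Tendsto c l (𝓝 0))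
    (hfc : ∀ i, ∀ x ∈ s, f i x ≤ c i) :
    TendstoUniformlyOn (fun i x => (f i x).toReal) 0 l s := by
  rw [SeminormedAddGroup.tendstoUniformlyOn_zero]
  intro ε hε
  filter_upwards [hc.eventually (gt_mem_nhds (ENNReal.ofReal_pos.2 hε))] with i hi x hx
  rw [Real.norm_of_nonneg ENNReal.toReal_nonneg]
  exact ENNReal.toReal_lt_of_lt_ofReal ((hfc i x hx).trans_lt hi)

section Group

variable {G : Type*} [Group G] [MeasurableSpace G]

theorem MeasureTheory.measure_diff_preimage_mul_right_mul_le [MeasurableMul G] (μ : Measure G)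
    [μ.IsMulRightInvariant] (E : Set G) (x y : G) :
    μ (E \ (· * (x * y)) ⁻¹' E) ≤ μ (E \ (· * x) ⁻¹' E) + μ (E \ (· * y) ⁻¹' E) := by
  have hxy : (· * (x * y)) ⁻¹' E = (· * x) ⁻¹' ((· * y) ⁻¹' E) := by
    ext; simp [mul_assoc]
  calc μ (E \ (· * (x * y)) ⁻¹' E)
      ≤ μ (E \ (· * x) ⁻¹' E ∪ (· * x) ⁻¹' E \ (· * x) ⁻¹' ((· * y) ⁻¹' E)) := by
        rw [hxy]; exact measure_mono (sdiff_triangle _ _ _)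
    _ ≤ μ (E \ (· * x) ⁻¹' E) + μ ((· * x) ⁻¹' (E \ (· * y) ⁻¹' E)) := measure_union_le _ _
    _ = μ (E \ (· * x) ⁻¹' E) + μ (E \ (· * y) ⁻¹' E) := by
        rw [measure_preimage_mul_right]

theorem MeasureTheory.continuous_measure_diff_preimage_mul_right [TopologicalSpace G]
    [IsTopologicalGroup G] [BorelSpace G] (μ : Measure G) [μ.IsMulRightInvariant]
    [μ.InnerRegularCompactLTTop] [IsLocallyFiniteMeasure μ] {E : Set G}
    (hE : NullMeasurableSet E μ) (hμE : μ E ≠ ∞) :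
    Continuous fun v : G => μ (E \ (· * v) ⁻¹' E) := by
  have hcont : Continuous (ContinuousMap.mulRight : G → C(G, G)) :=
    ContinuousMap.continuous_of_continuous_uncurry _ (continuous_snd.mul continuous_fst)
  have hpres (v : G) : MeasurePreserving (ContinuousMap.mulRight v) μ μ :=
    measurePreserving_mul_right μ v
  refine continuous_iff_continuousAt.2 fun v => ?_
  have htrans := tendsto_measure_symmDiff_preimage_nhds_zero (hcont.tendsto v)
    (.of_forall hpres) (hpres v) hE hμE
  simp only [ContinuousMap.coe_mulRight] at htrans
  exact tendsto_measure_diff_of_tendsto_measure_symmDiff htrans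
    (measure_ne_top_of_subset sdiff_subset hμE)

theorem MeasureTheory.mul_measure_le_setLIntegral_inv_add_setLIntegral_mul [MeasurableMul G]
    (μ : Measure G) [μ.IsMulRightInvariant] {f : G → ℝ≥0∞} (hf : Measurable f)
    (hf_sub : ∀ x y, f (x * y) ≤ f x + f y) (U : Set G) {K : Set G} {x : G} (hx : x ∈ K) :
    f x * μ U ≤ ∫⁻ v in U, f v⁻¹ ∂μ + ∫⁻ v in U * K, f v ∂μ := by
  calc f x * μ U = ∫⁻ _ in U, f x ∂μ := (setLIntegral_const U _).symm
    _ ≤ ∫⁻ v in U, (f v⁻¹ + f (v * x)) ∂μ :=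
        lintegral_mono fun v => by simpa using hf_sub v⁻¹ (v * x)
    _ = ∫⁻ v in U, f v⁻¹ ∂μ + ∫⁻ v in U, f (v * x) ∂μ :=
        lintegral_add_right _ (hf.comp (measurable_mul_const x))
    _ = ∫⁻ v in U, f v⁻¹ ∂μ + ∫⁻ v in (· * x) '' U, f v ∂μ := by
        rw [(measurePreserving_mul_right μ x).setLIntegral_comp_emb
          (MeasurableEquiv.mulRight x).measurableEmbedding]
    _ ≤ ∫⁻ v in U, f v⁻¹ ∂μ + ∫⁻ v in U * K, f v ∂μ := by
        gcongr
        exact image_subset_iff.2 fun v hv => mul_mem_mul hv hx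

theorem MeasureTheory.tendstoUniformlyOn_toReal_of_subadditive [TopologicalSpace G]
    [IsTopologicalGroup G] [LocallyCompactSpace G] [BorelSpace G] (μ : Measure G)
    [μ.IsMulRightInvariant] [IsFiniteMeasureOnCompacts μ] [μ.IsOpenPosMeasure]
    {ι : Type*} {l : Filter ι} [l.IsCountablyGenerated] {f : ι → G → ℝ≥0∞} {C : ℝ≥0∞}
    (hC : C ≠ ∞) (hf_meas : ∀ i, Measurable (f i)) (hf_le : ∀ i x, f i x ≤ C)
    (hf_sub : ∀ i x y, f i (x * y) ≤ f i x + f i y) (hf_lim : ∀ x, Tendsto (f · x) l (𝓝 0))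
    {K : Set G} (hK : IsCompact K) :
    TendstoUniformlyOn (fun i x => (f i x).toReal) 0 l K := by
  obtain ⟨U, hU, hU1⟩ := exists_compact_mem_nhds (1 : G)
  have hμU : μ U ≠ 0 := (μ.measure_pos_of_mem_nhds hU1).ne'
  have hlim : Tendsto (fun i => ∫⁻ v in U, f i v⁻¹ ∂μ + ∫⁻ v in U * K, f i v ∂μ) l (𝓝 0) := by
    simpa using
      (tendsto_setLIntegral_zero_of_le hC (fun i => (hf_meas i).comp measurable_inv)
        (fun i v => hf_le i v⁻¹) (fun v => hf_lim v⁻¹) hU.measure_lt_top.ne).add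
      (tendsto_setLIntegral_zero_of_le hC hf_meas hf_le hf_lim (hU.mul hK).measure_lt_top.ne)
  refine ENNReal.tendstoUniformlyOn_toReal_zero_of_le
    (by simpa using ENNReal.Tendsto.div_const hlim (Or.inr hμU)) fun i x hx => ?_
  rw [ENNReal.le_div_iff_mul_le (Or.inl hμU) (Or.inl hU.measure_lt_top.ne)]
  exact mul_measure_le_setLIntegral_inv_add_setLIntegral_mul μ (hf_meas i) (hf_sub i) U hx

end Group

theorem isFolnerSeq_of_pointwise_general {G : Type*} [Group G] [TopologicalSpace G]
    [IsTopologicalGroup G] [LocallyCompactSpace G]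
    [MeasurableSpace G] [BorelSpace G]
    (μ : Measure G) [μ.IsMulRightInvariant]
    [μ.IsOpenPosMeasure] [μ.Regular]
    (E : ℕ → Set G) (hE : ∀ k, MeasurableSet (E k))
    (hEfin : ∀ k, μ (E k) < ∞)
    (h : ∀ x : G, Tendsto (fun k => folnerDefect μ (E k) x) atTop (nhds 0)) :
    IsFolnerSeq μ E := by
  intro K hK
  set β : ℕ → G → ℝ≥0∞ := fun k v => μ (E k \ (· * v) ⁻¹' E k) / μ (E k)
  have hβ_meas (k : ℕ) : Measurable (β k) :=
    (continuous_measure_diff_preimage_mul_right μ (hE k).nullMeasurableSet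
      (hEfin k).ne).measurable.div_const _
  have hβ_le (k : ℕ) (v : G) : β k v ≤ 1 :=
    (ENNReal.div_le_div_right (measure_mono sdiff_subset) _).trans ENNReal.div_self_le_one
  have hβ_sub (k : ℕ) (x y : G) : β k (x * y) ≤ β k x + β k y :=
    (ENNReal.div_le_div_right (measure_diff_preimage_mul_right_mul_le μ (E k) x y) _).trans_eq
      ENNReal.add_div
  have hβ_lim (v : G) : Tendsto (β · v) atTop (𝓝 0) := by
    have hβ_ne_top (k : ℕ) : β k v ≠ ∞ := ne_top_of_le_ne_top ENNReal.one_ne_top (hβ_le k v)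
    rw [← ENNReal.tendsto_toReal_iff hβ_ne_top ENNReal.zero_ne_top]
    simpa [β, folnerDefect] using h v
  simpa [β, folnerDefect] using
    tendstoUniformlyOn_toReal_of_subadditive μ ENNReal.one_ne_top hβ_meas hβ_le hβ_sub hβ_lim hK

/-- If `β_{E_k}(x) → 0` for every `x ∈ G`, then `(E_k)` is a Følner
sequence, i.e. `β_{E_k} → 0` uniformly on every compact subset of `G`. -/
theorem isFolnerSeq_of_pointwise {G : Type*} [Group G] [TopologicalSpace G]
    [IsTopologicalGroup G] [LocallyCompactSpace G] [SigmaCompactSpace G] [T2Space G]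
    [MeasurableSpace G] [BorelSpace G]
    (μ : Measure G) [μ.IsMulRightInvariant] [IsFiniteMeasureOnCompacts μ]
    [μ.IsOpenPosMeasure] [μ.Regular] (hμ : μ ≠ 0)
    (E : ℕ → Set G) (hE : ∀ k, MeasurableSet (E k))
    (hE0 : ∀ k, 0 < μ (E k)) (hEfin : ∀ k, μ (E k) < ∞)
    (h : ∀ x : G, Tendsto (fun k => folnerDefect μ (E k) x) atTop (nhds 0)) :
    IsFolnerSeq μ E :=
  isFolnerSeq_of_pointwise_general μ E hE hEfin h
end

section
/- Let S be a trace class operator and T a bounded operator on H. Then the operator-operator convolution S*T, i.e. the function x ↦ tr(S α_x(T)), is continuous on G. -/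
/-! Write the trace class operator as `S = ∑ sᵢ ⟪φᵢ, ·⟫ ψᵢ` with `∑ sᵢ < ∞`. Against any Hilbert
basis `(bⱼ)` the double series `∑ᵢⱼ sᵢ ⟪φᵢ, A bⱼ⟫ ⟪bⱼ, ψᵢ⟫` converges absolutely (Cauchy–Schwarz
in `ℓ²` bounds its rows by `sᵢ ‖A‖`), so the sums may be swapped and
`tr(S α_x(T)) = ∑ᵢ sᵢ ⟪π(x) φᵢ, T π(x) ψᵢ⟫`. Each term is continuous in `x` by strong continuity
of `π` and bounded by `sᵢ ‖T‖` because `π(x)` is unitary, so the series converges uniformly. -/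

open MeasureTheory Filter Topology ComplexConjugate
open scoped Pointwise ENNReal InnerProductSpace

noncomputable section

variable {H : Type*} [NormedAddCommGroup H] [InnerProductSpace ℂ H] [CompleteSpace H]

/-- The trace of a (trace class) operator, computed as `∑ ⟨T e_i, e_i⟩` along a fixed
Hilbert basis of `H`. -/
noncomputable def opTrace (T : H →L[ℂ] H) : ℂ :=
  ∑' i : (exists_hilbertBasis ℂ H).choose,
    ⟪((exists_hilbertBasis ℂ H).choose_spec.choose i : H),
      T ((exists_hilbertBasis ℂ H).choose_spec.choose i)⟫_ℂ

/-- An operator is trace class if it admits a Schmidt decomposition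
`T = ∑ᵢ sᵢ (ψᵢ ⊗ φᵢ)` with orthonormal families `ψ, φ` and a summable sequence `s ≥ 0`
of singular values. Here `(ψ ⊗ φ)(ξ) = ⟨ξ, φ⟩ψ`. -/
def IsTraceClass (T : H →L[ℂ] H) : Prop :=
  ∃ (I : Type) (_ : Countable I) (s : I → ℝ) (ψ φ : I → H),
    Orthonormal ℂ ψ ∧ Orthonormal ℂ φ ∧ (∀ i, 0 ≤ s i) ∧ Summable s ∧
    ∀ ξ : H, HasSum (fun i => s i • (⟪φ i, ξ⟫_ℂ • ψ i)) (T ξ)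

variable {G : Type*} [Group G] [TopologicalSpace G] [IsTopologicalGroup G]
  [LocallyCompactSpace G] [SigmaCompactSpace G] [T2Space G]

/-- The conjugation action `α_x(T) = π(x)* T π(x)`. -/
def opConj (π : G →* (H →L[ℂ] H)) (x : G) (T : H →L[ℂ] H) : H →L[ℂ] H :=
  star (π x) * T * π x

/-- The operator-operator convolution `(S*T)(x) = tr(S α_x(T))`. -/
noncomputable def opConv (π : G →* (H →L[ℂ] H)) (S T : H →L[ℂ] H) (x : G) : ℂ :=
  opTrace (S * opConj π x T)

section TraceFormula

open scoped InnerProduct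

variable {𝕜 E ι I : Type*} [RCLike 𝕜] [NormedAddCommGroup E] [InnerProductSpace 𝕜 E]

theorem ContinuousLinearMap.norm_inner_apply_le (A : E →L[𝕜] E) (x y : E) :
    ‖⟪x, A y⟫_𝕜‖ ≤ ‖A‖ * ‖x‖ * ‖y‖ :=
  calc ‖⟪x, A y⟫_𝕜‖ ≤ ‖x‖ * ‖A y‖ := norm_inner_le_norm x (A y)
    _ ≤ ‖x‖ * (‖A‖ * ‖y‖) := by gcongr; exact A.le_opNorm y
    _ = ‖A‖ * ‖x‖ * ‖y‖ := by ring

theorem ContinuousLinearMap.inner_star_mul_mul_apply [CompleteSpace E] (U A : E →L[𝕜] E)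
    (x y : E) : ⟪x, (star U * A * U) y⟫_𝕜 = ⟪U x, A (U y)⟫_𝕜 := by
  rw [ContinuousLinearMap.star_eq_adjoint]
  exact ContinuousLinearMap.adjoint_inner_right U x (A (U y))

theorem HilbertBasis.tsum_norm_inner_mul_le_mul_norm (b : HilbertBasis ι 𝕜 E) (x y : E) :
    (Summable fun j => ‖⟪x, b j⟫_𝕜‖ * ‖⟪b j, y⟫_𝕜‖) ∧
      ∑' j, ‖⟪x, b j⟫_𝕜‖ * ‖⟪b j, y⟫_𝕜‖ ≤ ‖x‖ * ‖y‖ := by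
  have hholder : (2 : ℝ≥0∞).toReal.HolderConjugate (2 : ℝ≥0∞).toReal := by
    rw [Real.holderConjugate_iff]; norm_num
  simpa only [b.repr_apply_apply, b.repr.norm_map, norm_inner_symm x]
    using lp.tsum_mul_le_mul_norm hholder (b.repr x) (b.repr y)

theorem HilbertBasis.tsum_norm_inner_apply_mul_le [CompleteSpace E] (b : HilbertBasis ι 𝕜 E)
    (A : E →L[𝕜] E) (x y : E) :
    (Summable fun j => ‖⟪x, A (b j)⟫_𝕜‖ * ‖⟪b j, y⟫_𝕜‖) ∧
      ∑' j, ‖⟪x, A (b j)⟫_𝕜‖ * ‖⟪b j, y⟫_𝕜‖ ≤ ‖A‖ * ‖x‖ * ‖y‖ := by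
  obtain ⟨hsum, hle⟩ := b.tsum_norm_inner_mul_le_mul_norm ((A†) x) y
  simp only [ContinuousLinearMap.adjoint_inner_left] at hsum hle
  refine ⟨hsum, hle.trans ?_⟩
  gcongr
  simpa using (A†).le_opNorm x

theorem HilbertBasis.tsum_inner_mul_apply_of_hasSum [CompleteSpace E] (b : HilbertBasis ι 𝕜 E)
    {S : E →L[𝕜] E} {c : I → 𝕜} {φ ψ : I → E}
    (hc : Summable fun i => ‖c i‖ * (‖φ i‖ * ‖ψ i‖))
    (hS : ∀ ξ, HasSum (fun i => c i • ⟪φ i, ξ⟫_𝕜 • ψ i) (S ξ)) (A : E →L[𝕜] E) :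
    ∑' j, ⟪b j, (S * A) (b j)⟫_𝕜 = ∑' i, c i * ⟪φ i, A (ψ i)⟫_𝕜 := by
  set f : I → ι → 𝕜 := fun i j => c i * (⟪φ i, A (b j)⟫_𝕜 * ⟪b j, ψ i⟫_𝕜)
  have hrow : ∀ j, HasSum (fun i => f i j) ⟪b j, (S * A) (b j)⟫_𝕜 := fun j => by
    simpa [f, inner_smul_right, mul_assoc] using (hS (A (b j))).mapL (innerSL 𝕜 (b j))
  have hcol : ∀ i, HasSum (fun j => f i j) (c i * ⟪φ i, A (ψ i)⟫_𝕜) := fun i => by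
    simpa [f, ContinuousLinearMap.adjoint_inner_left]
      using (b.hasSum_inner_mul_inner ((A†) (φ i)) (ψ i)).mul_left (c i)
  have hcol_norm : ∀ i, (Summable fun j => ‖f i j‖) ∧
      ∑' j, ‖f i j‖ ≤ ‖A‖ * (‖c i‖ * (‖φ i‖ * ‖ψ i‖)) := fun i => by
    obtain ⟨hsum, hle⟩ := b.tsum_norm_inner_apply_mul_le A (φ i) (ψ i)
    simp only [f, norm_mul, tsum_mul_left]
    refine ⟨hsum.mul_left _, ?_⟩
    calc ‖c i‖ * ∑' j, ‖⟪φ i, A (b j)⟫_𝕜‖ * ‖⟪b j, ψ i⟫_𝕜‖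
        ≤ ‖c i‖ * (‖A‖ * ‖φ i‖ * ‖ψ i‖) := by gcongr
      _ = ‖A‖ * (‖c i‖ * (‖φ i‖ * ‖ψ i‖)) := by ring
  have hf : Summable (Function.uncurry f) := by
    refine Summable.of_norm ((summable_prod_of_nonneg fun _ => norm_nonneg _).2
      ⟨fun i => (hcol_norm i).1, ?_⟩)
    exact (hc.mul_left ‖A‖).of_nonneg_of_le (fun i => tsum_nonneg fun _ => norm_nonneg _)
      fun i => (hcol_norm i).2
  calc ∑' j, ⟪b j, (S * A) (b j)⟫_𝕜 = ∑' j, ∑' i, f i j :=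
        tsum_congr fun j => (hrow j).tsum_eq.symm
    _ = ∑' i, ∑' j, f i j := hf.tsum_comm
    _ = ∑' i, c i * ⟪φ i, A (ψ i)⟫_𝕜 := tsum_congr fun i => (hcol i).tsum_eq

end TraceFormula

/-- For `S` trace class and `T` bounded, the operator-operator
convolution `x ↦ tr(S α_x(T))` is continuous on `G`. -/
theorem opConv_continuous (π : G →* (H →L[ℂ] H))
    (hπ_unitary : ∀ x : G, π x ∈ unitary (H →L[ℂ] H))
    (hπ_cont : ∀ ψ : H, Continuous fun x : G => π x ψ)
    (S : H →L[ℂ] H) (hS : IsTraceClass S) (T : H →L[ℂ] H) :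
    Continuous (opConv π S T) := by
  obtain ⟨I, -, s, ψ, φ, hψ, hφ, hs_nonneg, hs, hS⟩ := hS
  have hconv : opConv π S T = fun x => ∑' i, (s i : ℂ) * ⟪π x (φ i), T (π x (ψ i))⟫_ℂ := by
    funext x
    refine ((exists_hilbertBasis ℂ H).choose_spec.choose.tsum_inner_mul_apply_of_hasSum
      (c := fun i => (s i : ℂ)) (φ := φ) (ψ := ψ) ?_ ?_ _).trans ?_
    · simpa [hφ.1, hψ.1, abs_of_nonneg (hs_nonneg _)] using hs
    · intro ξ
      convert hS ξ using 2 with i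
      exact (RCLike.real_smul_eq_coe_smul (K := ℂ) _ _).symm
    · simp only [opConj, ContinuousLinearMap.inner_star_mul_mul_apply]
  rw [hconv]
  refine continuous_tsum (fun i => continuous_const.mul ((hπ_cont _).inner
    (T.continuous.comp (hπ_cont _)))) (hs.mul_right ‖T‖) fun i x => ?_
  have hπ_norm := ContinuousLinearMap.norm_map_of_mem_unitary (hπ_unitary x)
  calc ‖(s i : ℂ) * ⟪π x (φ i), T (π x (ψ i))⟫_ℂ‖
      ≤ s i * (‖T‖ * ‖π x (φ i)‖ * ‖π x (ψ i)‖) := by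
        rw [norm_mul, Complex.norm_real, Real.norm_of_nonneg (hs_nonneg i)]
        exact mul_le_mul_of_nonneg_left (T.norm_inner_apply_le _ _) (hs_nonneg i)
    _ = s i * ‖T‖ := by simp [hπ_norm, hφ.1, hψ.1]
end
end

section
/- Assume the orthogonality relation with constant c > 0. Then for all trace class operators S and A on H, the function S*A belongs to L¹(G), with ‖S*A‖_{L¹(G)} ≤ c · ‖S‖_tr · ‖A‖_tr, and ∫_G (S*A)(x) dμ(x) = c · tr(S) · tr(A). -/
/-!
Expand `S = ∑ᵢ sᵢ ψᵢ ⊗ φᵢ` and `A = ∑ⱼ tⱼ ηⱼ ⊗ χⱼ` in Schmidt decompositions. Then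
`(S*A)(x) = ∑ᵢⱼ sᵢ tⱼ C_{ψᵢ,χⱼ}(x) conj C_{φᵢ,ηⱼ}(x)`, absolutely convergent because `π` is
unitary. By the orthogonality relation, matrix coefficients of unit vectors have
`∫ |C|² = c`, so by AM–GM each term has `L¹`-norm at most `c sᵢ tⱼ`, and its integral is
`c sᵢ ⟨ψᵢ, φᵢ⟩ tⱼ ⟨ηⱼ, χⱼ⟩`. Integrating the series term by term gives integrability, the bound
`c ∑ sᵢ ∑ tⱼ` (hence `c ‖S‖_tr ‖A‖_tr` after taking the infimum over decompositions) and, as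
`tr S = ∑ᵢ sᵢ ⟨ψᵢ, φᵢ⟩`, the value `c tr(S) tr(A)`.
-/

open MeasureTheory Filter Topology ComplexConjugate
open scoped Pointwise ENNReal InnerProductSpace

noncomputable section

variable {H : Type*} [NormedAddCommGroup H] [InnerProductSpace ℂ H] [CompleteSpace H]

/-- The trace norm of a trace class operator: the sum of its singular values. -/
noncomputable def traceNorm (T : H →L[ℂ] H) : ℝ :=
  sInf {r : ℝ | ∃ (I : Type) (_ : Countable I) (s : I → ℝ) (ψ φ : I → H),
    Orthonormal ℂ ψ ∧ Orthonormal ℂ φ ∧ (∀ i, 0 ≤ s i) ∧ HasSum s r ∧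
    ∀ ξ : H, HasSum (fun i => s i • (⟪φ i, ξ⟫_ℂ • ψ i)) (T ξ)}

variable {G : Type*} [Group G] [TopologicalSpace G] [IsTopologicalGroup G]
  [LocallyCompactSpace G] [SigmaCompactSpace G] [T2Space G]
  [MeasurableSpace G] [BorelSpace G]

/-- The matrix coefficient `C_{ψ,φ}(x) = ⟨π(x)ψ, φ⟩` (the paper's inner product is linear
in the first variable, so it is `⟪φ, π x ψ⟫` in Mathlib's convention). -/
def matCoeff (π : G →* (H →L[ℂ] H)) (ψ φ : H) (x : G) : ℂ :=
  ⟪φ, π x ψ⟫_ℂ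

theorem HilbertBasis.tsum_norm_inner_mul_norm_inner_le {ι 𝕜 F : Type*} [RCLike 𝕜]
    [NormedAddCommGroup F] [InnerProductSpace 𝕜 F] (b : HilbertBasis ι 𝕜 F) (x y : F) :
    (Summable fun i => ‖⟪b i, x⟫_𝕜‖ * ‖⟪b i, y⟫_𝕜‖) ∧
      ∑' i, ‖⟪b i, x⟫_𝕜‖ * ‖⟪b i, y⟫_𝕜‖ ≤ ‖x‖ * ‖y‖ := by
  have h22 : (2 : ℝ≥0∞).toReal.HolderConjugate (2 : ℝ≥0∞).toReal := by
    simpa using Real.HolderConjugate.two_two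
  simpa only [b.repr_apply_apply, LinearIsometryEquiv.norm_map] using
    lp.tsum_mul_le_mul_norm h22 (b.repr x) (b.repr y)

theorem HilbertBasis.summable_mul_norm_inner_mul_norm_inner {ι κ 𝕜 F : Type*} [RCLike 𝕜]
    [NormedAddCommGroup F] [InnerProductSpace 𝕜 F] (b : HilbertBasis κ 𝕜 F) {s : ι → ℝ}
    (hs₀ : ∀ i, 0 ≤ s i) (hs : Summable s) {x y : ι → F} {C : ℝ}
    (hxy : ∀ i, ‖x i‖ * ‖y i‖ ≤ C) :
    Summable fun p : ι × κ => s p.1 * (‖⟪b p.2, x p.1⟫_𝕜‖ * ‖⟪b p.2, y p.1⟫_𝕜‖) := by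
  have hnonneg : ∀ i k, 0 ≤ s i * (‖⟪b k, x i⟫_𝕜‖ * ‖⟪b k, y i⟫_𝕜‖) := fun i k =>
    mul_nonneg (hs₀ i) (by positivity)
  refine (summable_prod_of_nonneg fun p => hnonneg p.1 p.2).2 ⟨fun i => ?_, ?_⟩
  · exact (b.tsum_norm_inner_mul_norm_inner_le (x i) (y i)).1.mul_left (s i)
  · refine (hs.mul_right C).of_nonneg_of_le (fun i => tsum_nonneg (hnonneg i)) fun i => ?_
    dsimp only
    rw [tsum_mul_left]
    exact mul_le_mul_of_nonneg_left
      ((b.tsum_norm_inner_mul_norm_inner_le (x i) (y i)).2.trans (hxy i)) (hs₀ i)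

theorem MeasureTheory.integral_norm_mul_norm_le_of_memLp_two {α E : Type*} [MeasurableSpace α]
    {μ : Measure α} [NormedAddCommGroup E] {f g : α → E} (hf : MemLp f 2 μ)
    (hg : MemLp g 2 μ) :
    ∫ a, ‖f a‖ * ‖g a‖ ∂μ ≤ (∫ a, ‖f a‖ ^ 2 ∂μ + ∫ a, ‖g a‖ ^ 2 ∂μ) / 2 := by
  have amgm : ∀ a, ‖f a‖ * ‖g a‖ ≤ (‖f a‖ ^ 2 + ‖g a‖ ^ 2) / 2 := fun a => by
    nlinarith [two_mul_le_add_sq ‖f a‖ ‖g a‖]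
  have hsq := ((hf.integrable_norm_pow two_ne_zero).add
    (hg.integrable_norm_pow two_ne_zero)).div_const 2
  rw [← integral_add (hf.integrable_norm_pow two_ne_zero) (hg.integrable_norm_pow two_ne_zero),
    ← integral_div]
  refine integral_mono (hsq.mono' (hf.1.norm.mul hg.1.norm) (ae_of_all _ fun a => ?_)) hsq amgm
  rw [Real.norm_of_nonneg (by positivity)]
  exact amgm a

section SeriesOfFunctions

variable {α ι E : Type*} [MeasurableSpace α] {μ : Measure α} [NormedAddCommGroup E]
  [Countable ι] {F : ι → α → E} {f : α → E}

theorem MeasureTheory.lintegral_enorm_le_of_hasSum (hF : ∀ i, Integrable (F i) μ)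
    (hF_sum : Summable fun i => ∫ a, ‖F i a‖ ∂μ) (hf : ∀ᵐ a ∂μ, HasSum (F · a) (f a)) :
    ∫⁻ a, ‖f a‖ₑ ∂μ ≤ ENNReal.ofReal (∑' i, ∫ a, ‖F i a‖ ∂μ) :=
  calc ∫⁻ a, ‖f a‖ₑ ∂μ = ∫⁻ a, ‖∑' i, F i a‖ₑ ∂μ :=
        lintegral_congr_ae (hf.mono fun a ha => by simp only [ha.tsum_eq])
    _ ≤ ∫⁻ a, ∑' i, ‖F i a‖ₑ ∂μ := lintegral_mono fun a => enorm_tsum_le_tsum_enorm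
    _ = ∑' i, ENNReal.ofReal (∫ a, ‖F i a‖ ∂μ) := by
        rw [lintegral_tsum fun i => (hF i).1.enorm]
        simp only [ofReal_integral_norm_eq_lintegral_enorm (hF _)]
    _ = ENNReal.ofReal (∑' i, ∫ a, ‖F i a‖ ∂μ) :=
        (ENNReal.ofReal_tsum_of_nonneg (fun i => integral_nonneg fun a => norm_nonneg _)
          hF_sum).symm

theorem MeasureTheory.Integrable.of_hasSum (hF : ∀ i, Integrable (F i) μ)
    (hF_sum : Summable fun i => ∫ a, ‖F i a‖ ∂μ) (hf : ∀ᵐ a ∂μ, HasSum (F · a) (f a)) :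
    Integrable f μ :=
  ⟨aestronglyMeasurable_of_tendsto_ae atTop
      (fun s => s.aestronglyMeasurable_fun_sum fun i _ => (hF i).1) hf,
    (lintegral_enorm_le_of_hasSum hF hF_sum hf).trans_lt ENNReal.ofReal_lt_top⟩

theorem MeasureTheory.integral_norm_le_tsum_of_hasSum (hF : ∀ i, Integrable (F i) μ)
    (hF_sum : Summable fun i => ∫ a, ‖F i a‖ ∂μ) (hf : ∀ᵐ a ∂μ, HasSum (F · a) (f a)) :
    ∫ a, ‖f a‖ ∂μ ≤ ∑' i, ∫ a, ‖F i a‖ ∂μ := by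
  rw [integral_norm_eq_lintegral_enorm (Integrable.of_hasSum hF hF_sum hf).1]
  exact ENNReal.toReal_le_of_le_ofReal
    (tsum_nonneg fun i => integral_nonneg fun a => norm_nonneg _)
    (lintegral_enorm_le_of_hasSum hF hF_sum hf)

theorem MeasureTheory.hasSum_integral_of_hasSum [NormedSpace ℝ E]
    (hF : ∀ i, Integrable (F i) μ) (hF_sum : Summable fun i => ∫ a, ‖F i a‖ ∂μ)
    (hf : ∀ᵐ a ∂μ, HasSum (F · a) (f a)) :
    HasSum (fun i => ∫ a, F i a ∂μ) (∫ a, f a ∂μ) := by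
  convert hasSum_integral_of_summable_integral_norm hF hF_sum using 1
  exact integral_congr_ae (hf.mono fun a ha => ha.tsum_eq.symm)

end SeriesOfFunctions

section TraceClass

variable {E : Type*} [NormedAddCommGroup E] [InnerProductSpace ℂ E]

/-- The data quantified over in `IsTraceClass` and `traceNorm`. -/
structure SchmidtDecomposition (T : E →L[ℂ] E) where
  ι : Type
  [countable : Countable ι]
  s : ι → ℝ
  ψ : ι → E
  φ : ι → E
  orthonormal_ψ : Orthonormal ℂ ψ
  orthonormal_φ : Orthonormal ℂ φ
  nonneg : ∀ i, 0 ≤ s i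
  summable : Summable s
  hasSum_apply : ∀ ξ, HasSum (fun i => s i • (⟪φ i, ξ⟫_ℂ • ψ i)) (T ξ)

attribute [instance] SchmidtDecomposition.countable

theorem IsTraceClass.nonempty_schmidtDecomposition [CompleteSpace E] {T : E →L[ℂ] E}
    (hT : IsTraceClass T) : Nonempty (SchmidtDecomposition T) :=
  let ⟨I, _, s, ψ, φ, hψ, hφ, hs₀, hs, hT⟩ := hT
  ⟨⟨I, s, ψ, φ, hψ, hφ, hs₀, hs, hT⟩⟩

theorem traceNorm_eq_iInf [CompleteSpace E] (T : E →L[ℂ] E) :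
    traceNorm T = ⨅ D : SchmidtDecomposition T, ∑' i, D.s i := by
  refine congrArg sInf (Set.ext fun r => ⟨?_, ?_⟩)
  · rintro ⟨I, _, s, ψ, φ, hψ, hφ, hs₀, hs, hT⟩
    exact ⟨⟨I, s, ψ, φ, hψ, hφ, hs₀, hs.summable, hT⟩, hs.tsum_eq⟩
  · rintro ⟨D, rfl⟩
    exact ⟨D.ι, D.countable, D.s, D.ψ, D.φ, D.orthonormal_ψ, D.orthonormal_φ, D.nonneg,
      D.summable.hasSum, D.hasSum_apply⟩

namespace SchmidtDecomposition

variable {T : E →L[ℂ] E} (D : SchmidtDecomposition T)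

theorem tsum_nonneg : 0 ≤ ∑' i, D.s i :=
  _root_.tsum_nonneg D.nonneg

theorem hasSum_inner (v w : E) :
    HasSum (fun i => (D.s i : ℂ) * (⟪D.φ i, w⟫_ℂ * ⟪v, D.ψ i⟫_ℂ)) ⟪v, T w⟫_ℂ := by
  have h := (D.hasSum_apply w).mapL (innerSL ℂ v)
  simpa only [innerSL_apply_apply, inner_smul_right_eq_smul, Complex.real_smul, smul_eq_mul,
    mul_comm (⟪v, D.ψ _⟫_ℂ)] using h

theorem hasSum_tsum_inner_mul [CompleteSpace E] {κ : Type*} (b : HilbertBasis κ ℂ E)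
    (B : E →L[ℂ] E) :
    HasSum (fun i => (D.s i : ℂ) * ⟪D.φ i, B (D.ψ i)⟫_ℂ) (∑' k, ⟪b k, (T * B) (b k)⟫_ℂ) := by
  set B' := ContinuousLinearMap.adjoint B
  -- Both sums are iterated sums of this absolutely summable double series.
  set F : D.ι × κ → ℂ := fun p => D.s p.1 * (⟪D.φ p.1, B (b p.2)⟫_ℂ * ⟪b p.2, D.ψ p.1⟫_ℂ)
  have hadj : ∀ v w, ⟪v, B w⟫_ℂ = ⟪B' v, w⟫_ℂ := fun v w => (B.adjoint_inner_left w v).symm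
  have hF : Summable F := by
    refine (b.summable_mul_norm_inner_mul_norm_inner D.nonneg D.summable
      (x := fun i => B' (D.φ i)) (y := D.ψ) (C := ‖B‖) fun i => ?_).of_norm_bounded fun p => ?_
    · calc ‖B' (D.φ i)‖ * ‖D.ψ i‖ ≤ ‖B'‖ * ‖D.φ i‖ * ‖D.ψ i‖ := by
            gcongr; exact B'.le_opNorm _
        _ = ‖B‖ := by
            rw [LinearIsometryEquiv.norm_map, D.orthonormal_φ.1, D.orthonormal_ψ.1, mul_one,
              mul_one]
    · simp only [F, norm_mul, Complex.norm_real, Real.norm_of_nonneg (D.nonneg _), hadj,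
        norm_inner_symm (B' _)]
      rfl
  have hrow : ∀ k, HasSum (fun i => F (i, k)) ⟪b k, (T * B) (b k)⟫_ℂ := fun k =>
    D.hasSum_inner (b k) (B (b k))
  have hcol : ∀ i, HasSum (fun k => F (i, k)) (D.s i * ⟪D.φ i, B (D.ψ i)⟫_ℂ) := fun i => by
    simpa only [F, hadj] using
      (b.hasSum_inner_mul_inner (B' (D.φ i)) (D.ψ i)).mul_left (D.s i : ℂ)
  rw [(hF.prod_symm.hasSum.prod_fiberwise hrow).tsum_eq]
  exact (Equiv.prodComm κ D.ι).tsum_eq F ▸ hF.hasSum.prod_fiberwise hcol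

theorem hasSum_opTrace_mul [CompleteSpace E] (B : E →L[ℂ] E) :
    HasSum (fun i => (D.s i : ℂ) * ⟪D.φ i, B (D.ψ i)⟫_ℂ) (opTrace (T * B)) :=
  D.hasSum_tsum_inner_mul _ B

theorem hasSum_opTrace [CompleteSpace E] :
    HasSum (fun i => (D.s i : ℂ) * ⟪D.φ i, D.ψ i⟫_ℂ) (opTrace T) := by
  simpa using D.hasSum_opTrace_mul 1

end SchmidtDecomposition

end TraceClass

section Representation

variable {Γ E : Type*} [Group Γ] {_ : MeasurableSpace Γ} [NormedAddCommGroup E]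
  [InnerProductSpace ℂ E] {μ : Measure Γ} {π : Γ →* (E →L[ℂ] E)} {c : ℝ}

/-- The orthogonality relation with constant `c`, written for Mathlib's inner product, which is
conjugate-linear in the first variable. -/
def OrthogonalityRelation (μ : Measure Γ) (π : Γ →* (E →L[ℂ] E)) (c : ℝ) : Prop :=
  ∀ ψ₁ ψ₂ φ₁ φ₂ : E, ∫ x, matCoeff π ψ₁ φ₁ x * conj (matCoeff π ψ₂ φ₂ x) ∂μ
    = c * (⟪ψ₂, ψ₁⟫_ℂ * conj ⟪φ₂, φ₁⟫_ℂ)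

theorem OrthogonalityRelation.integral_norm_matCoeff_sq (h : OrthogonalityRelation μ π c)
    (ψ φ : E) : ∫ x, ‖matCoeff π ψ φ x‖ ^ 2 ∂μ = c * (‖ψ‖ ^ 2 * ‖φ‖ ^ 2) := by
  have h' := h ψ ψ φ φ
  simp only [Complex.mul_conj', inner_self_eq_norm_sq_to_K, map_pow, RCLike.conj_ofReal] at h'
  rw [← Complex.ofReal_inj, ← integral_complex_ofReal]
  push_cast
  exact h'

variable {S A : E →L[ℂ] E} (D : SchmidtDecomposition S) (D' : SchmidtDecomposition A)

/-- The term `sᵢ tⱼ ⟪χⱼ, π x ψᵢ⟫ ⟪π x φᵢ, ηⱼ⟫` of the expansion of `(S * A)(x)` along the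
decompositions `S = ∑ᵢ sᵢ ψᵢ ⊗ φᵢ` and `A = ∑ⱼ tⱼ ηⱼ ⊗ χⱼ`. -/
def opConvTerm (π : Γ →* (E →L[ℂ] E)) (p : D.ι × D'.ι) (x : Γ) : ℂ :=
  (D.s p.1 * D'.s p.2 : ℝ) *
    (matCoeff π (D.ψ p.1) (D'.φ p.2) x * conj (matCoeff π (D.φ p.1) (D'.ψ p.2) x))

theorem integrable_opConvTerm (hL2 : ∀ ψ φ : E, MemLp (matCoeff π ψ φ) 2 μ) (p : D.ι × D'.ι) :
    Integrable (opConvTerm D D' π p) μ :=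
  ((hL2 _ _).integrable_mul (hL2 _ _).star).const_mul _

theorem integral_norm_opConvTerm_le (h : OrthogonalityRelation μ π c)
    (hL2 : ∀ ψ φ : E, MemLp (matCoeff π ψ φ) 2 μ) (p : D.ι × D'.ι) :
    ∫ x, ‖opConvTerm D D' π p x‖ ∂μ ≤ c * (D.s p.1 * D'.s p.2) := by
  have hst : 0 ≤ D.s p.1 * D'.s p.2 := mul_nonneg (D.nonneg _) (D'.nonneg _)
  have hamgm := integral_norm_mul_norm_le_of_memLp_two (hL2 (D.ψ p.1) (D'.φ p.2))
    (hL2 (D.φ p.1) (D'.ψ p.2))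
  simp only [h.integral_norm_matCoeff_sq, D.orthonormal_ψ.1, D.orthonormal_φ.1,
    D'.orthonormal_ψ.1, D'.orthonormal_φ.1, one_pow, mul_one, add_self_div_two] at hamgm
  simp only [opConvTerm, norm_mul, Complex.norm_real, Real.norm_of_nonneg hst, RCLike.norm_conj]
  rw [integral_const_mul, mul_comm c]
  exact mul_le_mul_of_nonneg_left hamgm hst

theorem summable_integral_norm_opConvTerm (h : OrthogonalityRelation μ π c)
    (hL2 : ∀ ψ φ : E, MemLp (matCoeff π ψ φ) 2 μ) :
    Summable fun p => ∫ x, ‖opConvTerm D D' π p x‖ ∂μ :=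
  ((D.summable.mul_of_nonneg D'.summable D.nonneg D'.nonneg).mul_left c).of_nonneg_of_le
    (fun _ => integral_nonneg fun _ => norm_nonneg _) (integral_norm_opConvTerm_le D D' h hL2)

theorem integral_opConvTerm (h : OrthogonalityRelation μ π c) (p : D.ι × D'.ι) :
    ∫ x, opConvTerm D D' π p x ∂μ =
      c * (D.s p.1 * ⟪D.φ p.1, D.ψ p.1⟫_ℂ) * (D'.s p.2 * ⟪D'.φ p.2, D'.ψ p.2⟫_ℂ) := by
  simp only [opConvTerm]
  rw [integral_const_mul, h, inner_conj_symm]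
  push_cast
  ring

theorem norm_matCoeff_le [CompleteSpace E] (hπ : ∀ x, π x ∈ unitary (E →L[ℂ] E)) (ψ φ : E)
    (x : Γ) :
    ‖matCoeff π ψ φ x‖ ≤ ‖φ‖ * ‖ψ‖ :=
  calc ‖matCoeff π ψ φ x‖ ≤ ‖φ‖ * ‖π x ψ‖ := norm_inner_le_norm _ _
    _ = ‖φ‖ * ‖ψ‖ := by rw [ContinuousLinearMap.norm_map_of_mem_unitary (hπ x)]

theorem inner_opConj_apply [CompleteSpace E] (π : Γ →* (E →L[ℂ] E)) (x : Γ) (T : E →L[ℂ] E)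
    (v w : E) :
    ⟪v, opConj π x T w⟫_ℂ = ⟪π x v, T (π x w)⟫_ℂ :=
  (π x).adjoint_inner_right v (T (π x w))

theorem norm_opConvTerm_le [CompleteSpace E] (hπ : ∀ x, π x ∈ unitary (E →L[ℂ] E))
    (p : D.ι × D'.ι) (x : Γ) :
    ‖opConvTerm D D' π p x‖ ≤ D.s p.1 * D'.s p.2 := by
  have hst : 0 ≤ D.s p.1 * D'.s p.2 := mul_nonneg (D.nonneg _) (D'.nonneg _)
  have h₁ := norm_matCoeff_le hπ (D.ψ p.1) (D'.φ p.2) x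
  have h₂ := norm_matCoeff_le hπ (D.φ p.1) (D'.ψ p.2) x
  simp only [D.orthonormal_ψ.1, D.orthonormal_φ.1, D'.orthonormal_ψ.1, D'.orthonormal_φ.1,
    mul_one] at h₁ h₂
  simp only [opConvTerm, norm_mul, Complex.norm_real, Real.norm_of_nonneg hst, RCLike.norm_conj]
  exact mul_le_of_le_one_right hst (mul_le_one₀ h₁ (norm_nonneg _) h₂)

theorem hasSum_opConvTerm [CompleteSpace E] (hπ : ∀ x, π x ∈ unitary (E →L[ℂ] E)) (x : Γ) :
    HasSum (fun p => opConvTerm D D' π p x) (opConv π S A x) := by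
  have hsum : Summable fun p => opConvTerm D D' π p x :=
    (D.summable.mul_of_nonneg D'.summable D.nonneg D'.nonneg).of_norm_bounded
      (norm_opConvTerm_le D D' hπ · x)
  have hrow : ∀ i, HasSum (fun j => opConvTerm D D' π (i, j) x)
      (D.s i * ⟪D.φ i, opConj π x A (D.ψ i)⟫_ℂ) := fun i => by
    rw [inner_opConj_apply]
    simpa only [opConvTerm, matCoeff, inner_conj_symm, Complex.ofReal_mul, mul_assoc] using
      (D'.hasSum_inner (π x (D.φ i)) (π x (D.ψ i))).mul_left (D.s i : ℂ)
  show HasSum _ (opTrace (S * opConj π x A))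
  exact (hsum.hasSum.prod_fiberwise hrow).unique (D.hasSum_opTrace_mul _) ▸ hsum.hasSum

theorem integrable_opConv [CompleteSpace E] (hπ : ∀ x, π x ∈ unitary (E →L[ℂ] E))
    (hL2 : ∀ ψ φ : E, MemLp (matCoeff π ψ φ) 2 μ) (h : OrthogonalityRelation μ π c)
    (hS : IsTraceClass S) (hA : IsTraceClass A) : Integrable (opConv π S A) μ := by
  obtain ⟨D⟩ := hS.nonempty_schmidtDecomposition
  obtain ⟨D'⟩ := hA.nonempty_schmidtDecomposition
  exact Integrable.of_hasSum (integrable_opConvTerm D D' hL2)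
    (summable_integral_norm_opConvTerm D D' h hL2) (ae_of_all _ (hasSum_opConvTerm D D' hπ))

theorem integral_norm_opConv_le [CompleteSpace E] (hπ : ∀ x, π x ∈ unitary (E →L[ℂ] E))
    (hL2 : ∀ ψ φ : E, MemLp (matCoeff π ψ φ) 2 μ) (h : OrthogonalityRelation μ π c) :
    ∫ x, ‖opConv π S A x‖ ∂μ ≤ c * (∑' i, D.s i) * ∑' j, D'.s j := by
  have hst := D.summable.mul_of_nonneg D'.summable D.nonneg D'.nonneg
  calc ∫ x, ‖opConv π S A x‖ ∂μ ≤ ∑' p, ∫ x, ‖opConvTerm D D' π p x‖ ∂μ :=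
        integral_norm_le_tsum_of_hasSum (integrable_opConvTerm D D' hL2)
          (summable_integral_norm_opConvTerm D D' h hL2)
          (ae_of_all _ (hasSum_opConvTerm D D' hπ))
    _ ≤ ∑' p : D.ι × D'.ι, c * (D.s p.1 * D'.s p.2) :=
        (summable_integral_norm_opConvTerm D D' h hL2).tsum_le_tsum
          (integral_norm_opConvTerm_le D D' h hL2) (hst.mul_left c)
    _ = c * (∑' i, D.s i) * ∑' j, D'.s j := by
        rw [tsum_mul_left, (D.summable.hasSum.mul D'.summable.hasSum hst).tsum_eq, mul_assoc]

theorem integral_opConv [CompleteSpace E] (hπ : ∀ x, π x ∈ unitary (E →L[ℂ] E))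
    (hL2 : ∀ ψ φ : E, MemLp (matCoeff π ψ φ) 2 μ) (h : OrthogonalityRelation μ π c)
    (hS : IsTraceClass S) (hA : IsTraceClass A) :
    ∫ x, opConv π S A x ∂μ = c * opTrace S * opTrace A := by
  obtain ⟨D⟩ := hS.nonempty_schmidtDecomposition
  obtain ⟨D'⟩ := hA.nonempty_schmidtDecomposition
  have hint := hasSum_integral_of_hasSum (integrable_opConvTerm D D' hL2)
    (summable_integral_norm_opConvTerm D D' h hL2) (ae_of_all _ (hasSum_opConvTerm D D' hπ))
  simp only [integral_opConvTerm D D' h] at hint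
  exact ((D.hasSum_opTrace.mul_left (c : ℂ)).mul_eq D'.hasSum_opTrace hint).symm

theorem integral_norm_opConv_le_traceNorm [CompleteSpace E]
    (hπ : ∀ x, π x ∈ unitary (E →L[ℂ] E)) (hL2 : ∀ ψ φ : E, MemLp (matCoeff π ψ φ) 2 μ)
    (h : OrthogonalityRelation μ π c) (hc : 0 ≤ c) (hS : IsTraceClass S) (hA : IsTraceClass A) :
    ∫ x, ‖opConv π S A x‖ ∂μ ≤ c * traceNorm S * traceNorm A := by
  have := hS.nonempty_schmidtDecomposition
  have := hA.nonempty_schmidtDecomposition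
  rw [traceNorm_eq_iInf, traceNorm_eq_iInf, Real.mul_iInf_of_nonneg
    (mul_nonneg hc (Real.iInf_nonneg fun D => D.tsum_nonneg))]
  refine le_ciInf fun D' => ?_
  rw [Real.mul_iInf_of_nonneg hc, Real.iInf_mul_of_nonneg D'.tsum_nonneg]
  exact le_ciInf fun D => integral_norm_opConv_le D D' hπ hL2 h

end Representation

theorem opConv_mem_L1_general (μ : Measure G)
    (π : G →* (H →L[ℂ] H))
    (hπ_unitary : ∀ x : G, π x ∈ unitary (H →L[ℂ] H))
    (c : ℝ) (hc : 0 < c)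
    (hL2 : ∀ ψ φ : H, MemLp (matCoeff π ψ φ) 2 μ)
    (horth : ∀ ψ₁ ψ₂ φ₁ φ₂ : H,
      ∫ x, matCoeff π ψ₁ φ₁ x * conj (matCoeff π ψ₂ φ₂ x) ∂μ
        = c * (⟪ψ₂, ψ₁⟫_ℂ * conj ⟪φ₂, φ₁⟫_ℂ))
    (S A : H →L[ℂ] H) (hS : IsTraceClass S) (hA : IsTraceClass A) :
    Integrable (opConv π S A) μ ∧
    (∫ x, ‖opConv π S A x‖ ∂μ) ≤ c * traceNorm S * traceNorm A ∧
    (∫ x, opConv π S A x ∂μ) = c * opTrace S * opTrace A :=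
  ⟨integrable_opConv hπ_unitary hL2 horth hS hA,
    integral_norm_opConv_le_traceNorm hπ_unitary hL2 horth hc.le hS hA,
    integral_opConv hπ_unitary hL2 horth hS hA⟩

/-- Under the orthogonality relation with constant `c > 0`, for all trace
class operators `S` and `A`, the convolution `S*A` belongs to `L¹(G)`, with
`‖S*A‖_{L¹} ≤ c‖S‖_tr‖A‖_tr` and `∫ S*A dμ = c · tr(S) · tr(A)`. -/
theorem opConv_mem_L1 (μ : Measure G) [μ.IsMulRightInvariant] [IsFiniteMeasureOnCompacts μ]
    [μ.IsOpenPosMeasure] [μ.Regular] (hμ : μ ≠ 0)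
    (π : G →* (H →L[ℂ] H))
    (hπ_unitary : ∀ x : G, π x ∈ unitary (H →L[ℂ] H))
    (hπ_cont : ∀ ψ : H, Continuous fun x : G => π x ψ)
    (c : ℝ) (hc : 0 < c)
    (hL2 : ∀ ψ φ : H, MemLp (matCoeff π ψ φ) 2 μ)
    (horth : ∀ ψ₁ ψ₂ φ₁ φ₂ : H,
      ∫ x, matCoeff π ψ₁ φ₁ x * conj (matCoeff π ψ₂ φ₂ x) ∂μ
        = c * (⟪ψ₂, ψ₁⟫_ℂ * conj ⟪φ₂, φ₁⟫_ℂ))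
    (S A : H →L[ℂ] H) (hS : IsTraceClass S) (hA : IsTraceClass A) :
    Integrable (opConv π S A) μ ∧
    (∫ x, ‖opConv π S A x‖ ∂μ) ≤ c * traceNorm S * traceNorm A ∧
    (∫ x, opConv π S A x ∂μ) = c * opTrace S * opTrace A :=
  opConv_mem_L1_general μ π hπ_unitary c hc hL2 horth S A hS hA
end
end

section
/- Let (λ_n)_{n∈ℕ} be a summable sequence of real numbers with 0 ≤ λ_n ≤ 1 for all n, let δ ∈ (0,1), and set m_δ := max(1/δ, 1/(1−δ)). Then |#{n : λ_n > 1−δ} − Σ_n λ_n| ≤ m_δ · (Σ_n λ_n − Σ_n λ_n²). (Applied to the eigenvalues of a non-negative trace class operator T with operator norm ≤ 1, this reads |#{n : λ_n > 1−δ} − tr(T)| ≤ m_δ · (tr(T) − tr(T²)).) -/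
open Filter Topology

/-- For a summable sequence `(λ_n) ⊆ [0,1]`, `δ ∈ (0,1)` and
`m_δ = max(1/δ, 1/(1−δ))`, one has
`|#{n : λ_n > 1−δ} − Σ λ_n| ≤ m_δ · (Σ λ_n − Σ λ_n²)`. -/
theorem count_near_one_bound (lam : ℕ → ℝ) (hsum : Summable lam)
    (h01 : ∀ n, lam n ∈ Set.Icc (0 : ℝ) 1)
    (δ : ℝ) (hδ : δ ∈ Set.Ioo (0 : ℝ) 1) :
    |(Nat.card {n : ℕ | 1 - δ < lam n} : ℝ) - ∑' n, lam n| ≤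
      max (1 / δ) (1 / (1 - δ)) * ((∑' n, lam n) - ∑' n, (lam n) ^ 2) := by
  obtain ⟨hδ0, hδ1⟩ := hδ
  set m : ℝ := max (1 / δ) (1 / (1 - δ)) with hm
  have h1δ : (0:ℝ) < 1 - δ := by linarith
  have hm1 : 1 / δ ≤ m := le_max_left _ _
  have hm2 : 1 / (1 - δ) ≤ m := le_max_right _ _
  have hmδ : 1 ≤ m * δ := by
    rw [div_le_iff₀ hδ0] at hm1; linarith
  have hmδ' : 1 ≤ m * (1 - δ) := by
    rw [div_le_iff₀ h1δ] at hm2; linarith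
  have hm0 : 0 ≤ m := by nlinarith
  set S : Set ℕ := {n : ℕ | 1 - δ < lam n} with hS
  -- S is finite
  have hfin : S.Finite := by
    have h := hsum.tendsto_cofinite_zero
    have : ∀ᶠ n in Filter.cofinite, lam n < 1 - δ := by
      have := h.eventually (eventually_lt_nhds h1δ)
      simpa using this
    simpa [hS] using
      (Filter.eventually_cofinite.mp (this.mono fun n hn => not_lt.mpr hn.le))
  classical
  set f : ℕ → ℝ := S.indicator (fun _ => (1:ℝ)) with hf
  have hfsum : Summable f :=
    summable_of_finite_support (by
      apply Set.Finite.subset hfin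
      intro n hn
      rw [Function.mem_support] at hn
      by_contra h
      exact hn (Set.indicator_of_notMem h _))
  have hsq : Summable (fun n => (lam n) ^ 2) := by
    apply Summable.of_nonneg_of_le (fun n => sq_nonneg _) _ hsum
    intro n
    obtain ⟨h0, h1⟩ := h01 n
    nlinarith
  -- card = tsum of indicator
  have hcard : (Nat.card S : ℝ) = ∑' n, f n := by
    rw [tsum_eq_sum (s := hfin.toFinset)
      (fun b hb => by
        simp only [Set.Finite.mem_toFinset] at hb
        simp [hf, Set.indicator_of_notMem hb])]
    rw [Nat.card_eq_card_finite_toFinset hfin]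
    rw [Finset.sum_congr rfl (fun x hx => Set.indicator_of_mem (hfin.mem_toFinset.mp hx) _)]
    simp
  -- pointwise bound
  have hpt : ∀ n, |f n - lam n| ≤ m * (lam n - (lam n) ^ 2) := by
    intro n
    obtain ⟨h0, h1⟩ := h01 n
    by_cases hn : n ∈ S
    · have hgt : 1 - δ < lam n := hn
      rw [hf, Set.indicator_of_mem hn]
      rw [abs_of_nonneg (by linarith)]
      have h2 : (1:ℝ) ≤ m * lam n :=
        hmδ'.trans (mul_le_mul_of_nonneg_left hgt.le hm0)
      nlinarith [mul_nonneg (sub_nonneg.mpr h2) (sub_nonneg.mpr h1)]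
    · have hle : lam n ≤ 1 - δ := not_lt.mp hn
      rw [hf, Set.indicator_of_notMem hn]
      rw [abs_of_nonpos (by linarith)]
      have h2 : (1:ℝ) ≤ m * (1 - lam n) :=
        hmδ.trans (mul_le_mul_of_nonneg_left (by linarith) hm0)
      nlinarith [mul_nonneg (sub_nonneg.mpr h2) h0]
  have hdiff : Summable (fun n => lam n - (lam n) ^ 2) := hsum.sub hsq
  have hbnd : Summable (fun n => |f n - lam n|) := by
    apply Summable.of_nonneg_of_le (fun n => abs_nonneg _) hpt (hdiff.mul_left m)
  calc |(Nat.card S : ℝ) - ∑' n, lam n| = |∑' n, (f n - lam n)| := by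
        rw [hcard, Summable.tsum_sub hfsum hsum]
    _ ≤ ∑' n, |f n - lam n| := by
        simpa using norm_tsum_le_tsum_norm (f := fun n => f n - lam n) (by simpa using hbnd)
    _ ≤ ∑' n, m * (lam n - (lam n) ^ 2) := Summable.tsum_le_tsum hpt hbnd (hdiff.mul_left m)
    _ = m * ((∑' n, lam n) - ∑' n, (lam n) ^ 2) := by
        rw [tsum_mul_left, Summable.tsum_sub hsum hsq]
end
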